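/- Let (X₁,*₁) and (X₂,*₂) be abelian groups whose exponents divide n−1, and let F₁ and F₂ be the n-ary extensions of *₁ and *₂ respectively. (Forward) For every group homomorphism ψ : X₁ → X₂ and every g₂ ∈ X₂, the map h : X₁ → X₂ defined by h(x) = g₂ *₂ ψ(x) is a homomorphism of n-ary semigroups from (X₁,F₁) to (X₂,F₂). (Converse) Every homomorphism of n-ary semigroups h : (X₁,F₁) → (X₂,F₂) is of this form: the map ψ(x) = h(e₁)⁻¹ *₂ h(x), where e₁ is the identity of X₁, is a group homomorphism from (X₁,*₁) to (X₂,*₂), and h(x) = h(e₁) *₂ ψ(x) for all x ∈ X₁. -/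

import Mathlib

namespace NaryBand

variable {X : Type*}

/-- Replace the window of length `n` starting at position `i` (0-based) of the
`(2*n-1)`-tuple `x` by the value of `F` on that window. -/
def contract {n : ℕ} (F : (Fin n → X) → X) (i : ℕ) (hn : 2 ≤ n) (hi : i ≤ n - 1)
    (x : Fin (2 * n - 1) → X) : Fin n → X :=
  fun j =>
    if _h1 : (j : ℕ) < i then x ⟨(j : ℕ), by have := j.isLt; omega⟩
    else if _h2 : (j : ℕ) = i then
      F (fun k => x ⟨i + (k : ℕ), by have := k.isLt; omega⟩)
    else x ⟨(j : ℕ) + n - 1, by have := j.isLt; omega⟩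

/-- `F` is an associative `n`-ary operation. -/
def NAssoc {n : ℕ} (hn : 2 ≤ n) (F : (Fin n → X) → X) : Prop :=
  ∀ (i : ℕ) (hi : i + 1 ≤ n - 1) (x : Fin (2 * n - 1) → X),
    F (contract F i hn (by omega) x) = F (contract F (i + 1) hn (by omega) x)

/-- `F` is a symmetric `n`-ary operation. -/
def NSym {n : ℕ} (F : (Fin n → X) → X) : Prop :=
  ∀ (σ : Equiv.Perm (Fin n)) (x : Fin n → X), F (x ∘ σ) = F x

/-- `F` is an idempotent `n`-ary operation. -/
def NIdem {n : ℕ} (F : (Fin n → X) → X) : Prop :=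
  ∀ x : X, F (fun _ => x) = x

/-- The associated binary operation `B(x,y) = F(x,…,x,y)` (with `n-1` copies of `x`). -/
def assocB {n : ℕ} (F : (Fin n → X) → X) (x y : X) : X :=
  F (fun j => if (j : ℕ) < n - 1 then x else y)

/-- The map `ℓ_x : y ↦ B(x,y)`. -/
def ell {n : ℕ} (F : (Fin n → X) → X) (x : X) : X → X :=
  fun y => assocB F x y

/-- The `n`-ary extension `G^{n-1}(x₁,…,xₙ) = G(x₁, G(x₂, …, G(x_{n-1}, xₙ)…))`
of a binary operation `G`. -/
def nExt {n : ℕ} (hn : 1 ≤ n) (G : X → X → X) (x : Fin n → X) : X :=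
  (List.ofFn (fun i : Fin (n - 1) => x ⟨(i : ℕ), by have := i.isLt; omega⟩)).foldr G
    (x ⟨n - 1, by omega⟩)

/-- The relation `σ`: `x σ y` iff `B(x,y) = y` and `B(y,x) = x`. -/
def sigmaRel {n : ℕ} (F : (Fin n → X) → X) (x y : X) : Prop :=
  assocB F x y = y ∧ assocB F y x = x

/-- `(A, mul)` is an abelian group with identity `e` and inversion `inv`. -/
def IsAbelianGroup {A : Type*} (mul : A → A → A) (e : A) (inv : A → A) : Prop :=
  (∀ a b c, mul (mul a b) c = mul a (mul b c)) ∧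
  (∀ a b, mul a b = mul b a) ∧
  (∀ a, mul e a = a) ∧
  (∀ a, mul (inv a) a = e)

/-- `k`-fold product `a * ⋯ * a` with respect to `mul` (with `powMul mul e 0 a = e`). -/
def powMul {A : Type*} (mul : A → A → A) (e : A) : ℕ → A → A
  | 0, _ => e
  | k + 1, a => mul a (powMul mul e k a)

end NaryBand

open NaryBand

/-!
Written multiplicatively, the `n`-ary extension of a commutative group operation is the
product of its `n` arguments. Forward: `(g ψ x₁) ⋯ (g ψ xₙ) = gⁿ ψ(x₁ ⋯ xₙ)`, and `gⁿ = g`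
because the exponent divides `n - 1`. Converse: evaluating `h` on `(a, b, 1, …, 1)` gives
`h(ab) = h(a) h(b) h(1)ⁿ⁻² = h(a) h(b) h(1)⁻¹`, i.e. `x ↦ h(1)⁻¹ h(x)` is multiplicative.
-/

theorem List.foldr_mul_eq_prod_mul {M : Type*} [Monoid M] (l : List M) (b : M) :
    l.foldr (· * ·) b = l.prod * b := by
  induction l with
  | nil => simp
  | cons a t ih => simp [ih, mul_assoc]

theorem pow_eq_self_of_pow_pred_eq_one {M : Type*} [Monoid M] {n : ℕ} (hn : 1 ≤ n) {g : M}
    (hg : g ^ (n - 1) = 1) : g ^ n = g := by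
  rw [← Nat.sub_add_cancel hn, pow_succ, hg, one_mul]

namespace NaryBand

theorem nExt_mul_eq_prod {M : Type*} [CommMonoid M] {n : ℕ} (hn : 1 ≤ n) (xs : Fin n → M) :
    nExt hn (· * ·) xs = ∏ i, xs i := by
  obtain ⟨m, rfl⟩ : ∃ m, n = m + 1 := ⟨n - 1, by omega⟩
  rw [nExt, List.foldr_mul_eq_prod_mul, List.prod_ofFn, Fin.prod_univ_castSucc]
  rfl

theorem mul_map_nExt_mul {M N : Type*} [CommMonoid M] [CommMonoid N] {n : ℕ} (hn : 1 ≤ n)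
    (ψ : M →* N) (g : N) (hg : g ^ n = g) (xs : Fin n → M) :
    g * ψ (nExt hn (· * ·) xs) = nExt hn (· * ·) (fun i => g * ψ (xs i)) := by
  rw [nExt_mul_eq_prod, nExt_mul_eq_prod, map_prod, Finset.prod_mul_distrib, Finset.prod_const,
    Finset.card_univ, Fintype.card_fin, hg]

theorem map_mul_of_map_nExt_mul {M G : Type*} [CommMonoid M] [CommGroup G] {n : ℕ} (hn : 2 ≤ n)
    (h : M → G) (hh : ∀ xs : Fin n → M,
      h (nExt (Nat.le_of_succ_le hn) (· * ·) xs) =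
        nExt (Nat.le_of_succ_le hn) (· * ·) (fun i => h (xs i)))
    (h1 : h 1 ^ (n - 1) = 1) (a b : M) :
    h (a * b) = h a * h b * (h 1)⁻¹ := by
  obtain ⟨m, rfl⟩ : ∃ m, n = m + 2 := ⟨n - 2, by omega⟩
  have key := hh (Fin.cons a (Fin.cons b fun _ => 1))
  simp only [nExt_mul_eq_prod, Fin.prod_univ_succ, Fin.cons_zero, Fin.cons_succ,
    Finset.prod_const_one, mul_one, Finset.prod_const, Finset.card_univ, Fintype.card_fin] at key
  have h1m : h 1 ^ m = (h 1)⁻¹ := eq_inv_of_mul_eq_one_left (by rwa [← pow_succ])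
  rw [key, h1m, mul_assoc]

end NaryBand

/-- Let `(X₁,*₁)` and `(X₂,*₂)` be abelian groups whose exponents
divide `n-1`, with `n`-ary extensions `F₁`, `F₂`. Every map `h(x) = g₂ *₂ ψ(x)` with
`ψ` a group homomorphism and `g₂ ∈ X₂` is a homomorphism of `n`-ary semigroups from
`(X₁,F₁)` to `(X₂,F₂)`; conversely, every such homomorphism `h` arises this way:
`ψ(x) = h(e₁)⁻¹ *₂ h(x)` is a group homomorphism and `h(x) = h(e₁) *₂ ψ(x)`. -/
theorem stmt_17 {X₁ X₂ : Type*} [CommGroup X₁] [CommGroup X₂] {n : ℕ} (hn : 2 ≤ n)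
    (h₂ : ∀ a : X₂, a ^ (n - 1) = 1) :
    (∀ (ψ : X₁ →* X₂) (g₂ : X₂) (xs : Fin n → X₁),
      g₂ * ψ (nExt (show 1 ≤ n by omega) (· * ·) xs)
        = nExt (show 1 ≤ n by omega) (· * ·) (fun i => g₂ * ψ (xs i))) ∧
    (∀ h : X₁ → X₂,
      (∀ xs : Fin n → X₁,
        h (nExt (show 1 ≤ n by omega) (· * ·) xs)
          = nExt (show 1 ≤ n by omega) (· * ·) (fun i => h (xs i))) →
      (∀ a b : X₁, (h 1)⁻¹ * h (a * b) = ((h 1)⁻¹ * h a) * ((h 1)⁻¹ * h b)) ∧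
      (h 1)⁻¹ * h 1 = 1 ∧
      (∀ x : X₁, h x = h 1 * ((h 1)⁻¹ * h x))) := by
  refine ⟨fun ψ g₂ => mul_map_nExt_mul _ ψ g₂ (pow_eq_self_of_pow_pred_eq_one (by omega) (h₂ g₂)),
    fun h hh => ⟨fun a b => ?_, inv_mul_cancel _, fun x => (mul_inv_cancel_left _ _).symm⟩⟩
  rw [map_mul_of_map_nExt_mul hn h hh (h₂ _)]
  ac_rfl
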